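/- arXiv:1108.5305 — 2 statements merged into one kernel-verified Lean document; each statement's English description precedes it below -/
import Mathlib

section
/- For every x=(x₂,x₃)∈ℝ² with x₂² ≠ x₃² and x₃ ≠ 0 one has (DB')(x) = A'(x) and (DA')(x) = B'(x). (These two scalar identities express that the singular form ψ̃'₀,₁(x) is closed on D_W outside its singularity, paper Lemma 5.9.) -/
open MeasureTheory

/-- The `e₃`-component `B'` of the singular function `ψ̃'₀,₁` on the Minkowski plane. -/
noncomputable def B' (x : ℝ × ℝ) : ℝ :=
  if x.1 ^ 2 - x.2 ^ 2 > 0 then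
    (1/2) * min |x.1 - x.2| |x.1 + x.2| * Real.exp (-(Real.pi * (x.1 ^ 2 - x.2 ^ 2)))
  else 0

/-- The `e₂`-component `A'` of the singular function `ψ̃'₀,₁`. -/
noncomputable def A' (x : ℝ × ℝ) : ℝ := - Real.sign (x.1 * x.2) * B' x

/-!
`D` annihilates the Minkowski form `q`, so it annihilates `e^{-πq}`, and the whole computation
reduces to the prefactor. Off the light cone and off `x₃ = 0`, the signs `a = sgn x₂`,
`b = sgn x₃` are locally constant; where `q > 0` one has `min(|x₂-x₃|, |x₂+x₃|) = |x₂| - |x₃|`,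
so locally `B' = ½(a x₂ - b x₃) e^{-πq}` and `A' = -ab B'`. Since `D(a x₂ - b x₃) = a x₃ - b x₂
= -ab (a x₂ - b x₃)`, we get `DB' = -ab B' = A'` and `DA' = (ab)² B' = B'`. Where `q < 0` both
functions vanish near `x`.
-/

open Filter Topology Real

namespace Real

theorem sign_mul_self_eq_abs (r : ℝ) : sign r * r = |r| := by
  rcases lt_trichotomy r 0 with hr | rfl | hr
  · rw [sign_of_neg hr, abs_of_neg hr]; ring
  · simp
  · rw [sign_of_pos hr, abs_of_pos hr]; ring

theorem sign_mul_sign_self {r : ℝ} (hr : r ≠ 0) : sign r * sign r = 1 := by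
  rcases sign_apply_eq_of_ne_zero r hr with h | h <;> rw [h] <;> norm_num

theorem sign_mul (u v : ℝ) : sign (u * v) = sign u * sign v := by
  rcases lt_trichotomy u 0 with hu | hu | hu <;> rcases lt_trichotomy v 0 with hv | hv | hv <;>
    simp [hu, hv, sign_of_pos, sign_of_neg, mul_pos_of_neg_of_neg, mul_neg_of_pos_of_neg,
      mul_neg_of_neg_of_pos]

theorem eventually_sign_eq {r : ℝ} (hr : r ≠ 0) : ∀ᶠ t in 𝓝 r, sign t = sign r := by
  rcases hr.lt_or_gt with hr | hr
  · filter_upwards [eventually_lt_nhds hr] with t ht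
    rw [sign_of_neg ht, sign_of_neg hr]
  · filter_upwards [eventually_gt_nhds hr] with t ht
    rw [sign_of_pos ht, sign_of_pos hr]

end Real

theorem ne_zero_of_sq_lt_sq {u v : ℝ} (h : v ^ 2 < u ^ 2) : u ≠ 0 :=
  (pow_ne_zero_iff two_ne_zero).1 ((sq_nonneg v).trans_lt h).ne'

/-- `HasBoostDeriv g c x` says `(Dg)(x) = c`, with `Dg` built from the two partial derivatives. -/
def HasBoostDeriv (g : ℝ × ℝ → ℝ) (c : ℝ) (x : ℝ × ℝ) : Prop :=
  ∃ d₂ d₃ : ℝ, HasDerivAt (fun t => g (t, x.2)) d₂ x.1 ∧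
    HasDerivAt (fun t => g (x.1, t)) d₃ x.2 ∧ x.2 * d₂ + x.1 * d₃ = c

theorem HasFDerivAt.hasBoostDeriv {g : ℝ × ℝ → ℝ} {L : ℝ × ℝ →L[ℝ] ℝ} {x : ℝ × ℝ}
    (h : HasFDerivAt g L x) : HasBoostDeriv g (L (x.2, x.1)) x := by
  refine ⟨L (1, 0), L (0, 1), ?_, ?_, ?_⟩
  · exact h.comp_hasDerivAt x.1 ((hasDerivAt_id x.1).prodMk (hasDerivAt_const x.1 x.2))
  · exact h.comp_hasDerivAt x.2 ((hasDerivAt_const x.2 x.1).prodMk (hasDerivAt_id x.2))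
  · rw [← smul_eq_mul, ← smul_eq_mul, ← L.map_smul, ← L.map_smul, ← L.map_add]
    simp

theorem HasBoostDeriv.congr_of_eventuallyEq {g h : ℝ × ℝ → ℝ} {c : ℝ} {x : ℝ × ℝ}
    (hg : HasBoostDeriv g c x) (hgh : h =ᶠ[𝓝 x] g) : HasBoostDeriv h c x := by
  obtain ⟨d₂, d₃, h₂, h₃, hc⟩ := hg
  refine ⟨d₂, d₃, h₂.congr_of_eventuallyEq ?_, h₃.congr_of_eventuallyEq ?_, hc⟩
  · exact ((Continuous.prodMk_left x.2).tendsto x.1).eventually hgh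
  · exact ((Continuous.prodMk_right x.1).tendsto x.2).eventually hgh

theorem HasBoostDeriv.const_mul {g : ℝ × ℝ → ℝ} {c : ℝ} {x : ℝ × ℝ} (k : ℝ)
    (hg : HasBoostDeriv g c x) : HasBoostDeriv (fun y => k * g y) (k * c) x := by
  obtain ⟨d₂, d₃, h₂, h₃, hc⟩ := hg
  exact ⟨k * d₂, k * d₃, h₂.const_mul k, h₃.const_mul k, by rw [← hc]; ring⟩

theorem hasBoostDeriv_const (k : ℝ) (x : ℝ × ℝ) : HasBoostDeriv (fun _ => k) 0 x := by
  simpa using (hasFDerivAt_const k x).hasBoostDeriv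

noncomputable def coneBranch (a b : ℝ) (y : ℝ × ℝ) : ℝ :=
  1 / 2 * (a * y.1 - b * y.2) * exp (-(π * (y.1 ^ 2 - y.2 ^ 2)))

theorem hasBoostDeriv_coneBranch (a b : ℝ) (y : ℝ × ℝ) :
    HasBoostDeriv (coneBranch a b) (-coneBranch b a y) y := by
  have h₁ := hasFDerivAt_fst (𝕜 := ℝ) (p := y)
  have h₂ := hasFDerivAt_snd (𝕜 := ℝ) (p := y)
  have hq : HasFDerivAt (fun y : ℝ × ℝ => -(π * (y.1 ^ 2 - y.2 ^ 2))) _ y :=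
    (((h₁.pow 2).sub (h₂.pow 2)).const_mul π).neg
  have hℓ : HasFDerivAt (fun y : ℝ × ℝ => 1 / 2 * (a * y.1 - b * y.2)) _ y :=
    ((h₁.const_mul a).sub (h₂.const_mul b)).const_mul _
  have h : HasFDerivAt (coneBranch a b) _ y := hℓ.mul hq.exp
  convert h.hasBoostDeriv using 1
  simp only [coneBranch, Nat.add_one_sub_one, pow_one, nsmul_eq_mul, Nat.cast_ofNat, smul_neg,
    add_apply, neg_apply, smul_apply, sub_apply, ContinuousLinearMap.coe_fst',
    ContinuousLinearMap.coe_snd', smul_eq_mul]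
  ring

theorem coneBranch_swap {a b : ℝ} (ha : a * a = 1) (hb : b * b = 1) (y : ℝ × ℝ) :
    coneBranch b a y = a * b * coneBranch a b y := by
  unfold coneBranch
  linear_combination (1 / 2 * exp (-(π * (y.1 ^ 2 - y.2 ^ 2)))) * (a * y.2 * hb - b * y.1 * ha)

theorem min_abs_sub_abs_add {u v : ℝ} (h : |v| ≤ |u|) : min |u - v| |u + v| = |u| - |v| := by
  rcases abs_cases u with ⟨hu, _⟩ | ⟨hu, _⟩ <;> rcases abs_cases v with ⟨hv, _⟩ | ⟨hv, _⟩ <;>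
    rcases abs_cases (u - v) with ⟨h₁, _⟩ | ⟨h₁, _⟩ <;>
    rcases abs_cases (u + v) with ⟨h₂, _⟩ | ⟨h₂, _⟩ <;>
    simp only [hu, hv, h₁, h₂] at h ⊢ <;> rw [min_def] <;> split_ifs <;> linarith

theorem B'_eq_zero_of_sq_le {y : ℝ × ℝ} (hy : y.1 ^ 2 ≤ y.2 ^ 2) : B' y = 0 :=
  if_neg (by linarith)

theorem B'_eq_of_abs_lt {y : ℝ × ℝ} (hy : |y.2| < |y.1|) :
    B' y = 1 / 2 * (|y.1| - |y.2|) * exp (-(π * (y.1 ^ 2 - y.2 ^ 2))) := by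
  have hq : y.1 ^ 2 - y.2 ^ 2 > 0 := by
    rw [gt_iff_lt, sub_pos, ← sq_abs y.1, ← sq_abs y.2]
    exact pow_lt_pow_left₀ hy (abs_nonneg _) two_ne_zero
  rw [B', if_pos hq, min_abs_sub_abs_add hy.le]

theorem eventuallyEq_B'_zero {x : ℝ × ℝ} (hx : x.1 ^ 2 < x.2 ^ 2) : B' =ᶠ[𝓝 x] 0 := by
  have hcont : Continuous fun y : ℝ × ℝ => y.2 ^ 2 - y.1 ^ 2 := by fun_prop
  filter_upwards [continuousAt_const.eventually_lt hcont.continuousAt (sub_pos.2 hx)] with y hy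
  exact B'_eq_zero_of_sq_le (by linarith)

theorem eventuallyEq_A'_zero {x : ℝ × ℝ} (hx : x.1 ^ 2 < x.2 ^ 2) : A' =ᶠ[𝓝 x] 0 := by
  filter_upwards [eventuallyEq_B'_zero hx] with y hy
  simp [A', hy]

theorem eventually_sign_fst_eq_and_sign_snd_eq {x : ℝ × ℝ} (h₁ : x.1 ≠ 0) (h₂ : x.2 ≠ 0) :
    ∀ᶠ y in 𝓝 x, sign y.1 = sign x.1 ∧ sign y.2 = sign x.2 :=
  (continuous_fst.tendsto x |>.eventually (eventually_sign_eq h₁)).and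
    (continuous_snd.tendsto x |>.eventually (eventually_sign_eq h₂))

theorem eventuallyEq_B'_coneBranch {x : ℝ × ℝ} (hx : x.2 ^ 2 < x.1 ^ 2) (h₂ : x.2 ≠ 0) :
    B' =ᶠ[𝓝 x] coneBranch (sign x.1) (sign x.2) := by
  have hx' : |x.2| < |x.1| := sq_lt_sq.1 hx
  have h₁ : x.1 ≠ 0 := ne_zero_of_sq_lt_sq hx
  have hcont : Continuous fun y : ℝ × ℝ => |y.1| - |y.2| := by fun_prop
  filter_upwards [eventually_sign_fst_eq_and_sign_snd_eq h₁ h₂,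
    continuousAt_const.eventually_lt hcont.continuousAt (sub_pos.2 hx')] with y ⟨hs₁, hs₂⟩ hy
  rw [B'_eq_of_abs_lt (sub_pos.1 hy), coneBranch, ← hs₁, ← hs₂, sign_mul_self_eq_abs,
    sign_mul_self_eq_abs]

theorem eventuallyEq_A'_coneBranch {x : ℝ × ℝ} (hx : x.2 ^ 2 < x.1 ^ 2) (h₂ : x.2 ≠ 0) :
    A' =ᶠ[𝓝 x] fun y => -(sign x.1 * sign x.2) * coneBranch (sign x.1) (sign x.2) y := by
  have h₁ : x.1 ≠ 0 := ne_zero_of_sq_lt_sq hx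
  filter_upwards [eventually_sign_fst_eq_and_sign_snd_eq h₁ h₂,
    eventuallyEq_B'_coneBranch hx h₂] with y ⟨hs₁, hs₂⟩ hy
  rw [A', sign_mul, hs₁, hs₂, hy]

theorem hasBoostDeriv_B' {x : ℝ × ℝ} (hx : x.1 ^ 2 ≠ x.2 ^ 2) (h₂ : x.2 ≠ 0) :
    HasBoostDeriv B' (A' x) x := by
  rcases hx.lt_or_gt with hx | hx
  · rw [(eventuallyEq_A'_zero hx).eq_of_nhds]
    exact (hasBoostDeriv_const 0 x).congr_of_eventuallyEq (eventuallyEq_B'_zero hx)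
  · have h₁ : x.1 ≠ 0 := ne_zero_of_sq_lt_sq hx
    rw [(eventuallyEq_A'_coneBranch hx h₂).eq_of_nhds]
    convert (hasBoostDeriv_coneBranch _ _ x).congr_of_eventuallyEq
      (eventuallyEq_B'_coneBranch hx h₂) using 1
    rw [coneBranch_swap (sign_mul_sign_self h₁) (sign_mul_sign_self h₂)]
    ring

theorem hasBoostDeriv_A' {x : ℝ × ℝ} (hx : x.1 ^ 2 ≠ x.2 ^ 2) (h₂ : x.2 ≠ 0) :
    HasBoostDeriv A' (B' x) x := by
  rcases hx.lt_or_gt with hx | hx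
  · rw [(eventuallyEq_B'_zero hx).eq_of_nhds]
    exact (hasBoostDeriv_const 0 x).congr_of_eventuallyEq (eventuallyEq_A'_zero hx)
  · have h₁ : x.1 ≠ 0 := ne_zero_of_sq_lt_sq hx
    have ha := sign_mul_sign_self h₁
    have hb := sign_mul_sign_self h₂
    rw [(eventuallyEq_B'_coneBranch hx h₂).eq_of_nhds]
    convert ((hasBoostDeriv_coneBranch _ _ x).const_mul _).congr_of_eventuallyEq
      (eventuallyEq_A'_coneBranch hx h₂) using 1
    rw [coneBranch_swap ha hb]
    linear_combination (-coneBranch (sign x.1) (sign x.2) x) * (sign x.2 * sign x.2 * ha + hb)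

/-- Paper Lemma 5.9 (scalar components): for `x₂² ≠ x₃²` and `x₃ ≠ 0`,
`(DB')(x) = A'(x)` and `(DA')(x) = B'(x)`, where
`(Dg)(x) = x₃·∂g/∂x₂(x) + x₂·∂g/∂x₃(x)`. -/
theorem stmt7 (x₂ x₃ : ℝ) (hx : x₂ ^ 2 ≠ x₃ ^ 2) (hx3 : x₃ ≠ 0) :
    (∃ d₂ d₃ : ℝ,
      HasDerivAt (fun t : ℝ => B' (t, x₃)) d₂ x₂ ∧
      HasDerivAt (fun t : ℝ => B' (x₂, t)) d₃ x₃ ∧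
      x₃ * d₂ + x₂ * d₃ = A' (x₂, x₃)) ∧
    (∃ d₂ d₃ : ℝ,
      HasDerivAt (fun t : ℝ => A' (t, x₃)) d₂ x₂ ∧
      HasDerivAt (fun t : ℝ => A' (x₂, t)) d₃ x₃ ∧
      x₃ * d₂ + x₂ * d₃ = B' (x₂, x₃)) :=
  ⟨hasBoostDeriv_B' (x := (x₂, x₃)) hx hx3, hasBoostDeriv_A' (x := (x₂, x₃)) hx hx3⟩
end

section
/- Fix x=(x₂,x₃)∈ℝ² and set n = x₂² − x₃². Let g be either g_A(r) = −(1/√2)·r·x₂·x₃·e^{−2π r x₃²} or g_B(r) = (1/(4√2·π))·e^{−2π r x₃²}. Define F on the upper half plane ℍ by F(u+iv) = −(∫_v^∞ g(r)·r^{−3/2} dr)·e^{πin(u+iv)}. Then F is differentiable and −2i·v²·(1/2)·(∂F/∂u + i·∂F/∂v)(u+iv) = v^{1/2}·g(v)·e^{πin(u+iv)} for all u∈ℝ, v>0. (This is the identity L ψ̃₀,₁(x,τ) = ψ₀,₁(x,τ) of paper Lemma 5.12, where L = −2iv²·∂/∂τ̄ is the Maass lowering operator of the weight-2 function ψ̃₀,₁(x,τ)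 and v^{1/2}g(v)e^{πinτ} are the components of ψ₀,₁(x,τ).) -/
/-!
Write `F(u + iv) = G(v) · e^{cτ}` with `τ = u + iv`, `c = πin` and `G(v) = -∫_v^∞ g(r) r^{-3/2} dr`.
Since `e^{cτ}` is holomorphic, `∂/∂τ̄` only sees the factor `G`, so `(∂_u + i∂_v) F = i G'(v) e^{cτ}`,
and `G'(v) = g(v) v^{-3/2}` by the fundamental theorem of calculus for the tail integral. Hence
`-2iv² · ½ · (∂_u + i∂_v) F = v² · v^{-3/2} g(v) e^{cτ} = v^{1/2} g(v) e^{cτ}`. The tail integral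
converges because both components `g` are bounded on `[0, ∞)`.
-/

open MeasureTheory Set Complex

theorem hasDerivAt_setIntegral_Ioi {E : Type*} [NormedAddCommGroup E] [NormedSpace ℝ E]
    [CompleteSpace E] {f : ℝ → E} {a v : ℝ} (hf : IntegrableOn f (Ioi a)) (hav : a < v)
    (hfv : ContinuousAt f v) :
    HasDerivAt (fun w => ∫ r in Ioi w, f r) (-f v) v := by
  have hmeas : StronglyMeasurableAtFilter f (nhds v) :=
    ⟨Ioi a, Ioi_mem_nhds hav, hf.aestronglyMeasurable⟩
  have hsplit : (fun w => ∫ r in Ioi w, f r) =ᶠ[nhds v]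
      fun w => (∫ r in w..v, f r) + ∫ r in Ioi v, f r := by
    filter_upwards [Ioi_mem_nhds hav] with w hw
    exact (intervalIntegral.integral_interval_add_Ioi (hf.mono_set (Ioi_subset_Ioi hw.le))
      (hf.mono_set (Ioi_subset_Ioi hav.le))).symm
  exact ((intervalIntegral.integral_hasDerivAt_left IntervalIntegrable.refl
    hmeas hfv).add_const _).congr_of_eventuallyEq hsplit

theorem exists_hasDerivAt_partials_mul_holomorphic {G : ℝ → ℂ} {G' : ℂ} {f : ℂ → ℂ} {f' : ℂ}
    {u v : ℝ} (hG : HasDerivAt G G' v) (hf : HasDerivAt f f' (u + I * v)) :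
    ∃ du dv : ℂ,
      HasDerivAt (fun u' : ℝ => G v * f (u' + I * v)) du u ∧
      HasDerivAt (fun v' : ℝ => G v' * f (u + I * v')) dv v ∧
      du + I * dv = I * G' * f (u + I * v) := by
  have hre : HasDerivAt (fun z : ℂ => f (z + I * v)) f' u := hf.comp_add_const (u : ℂ) (I * v)
  have him : HasDerivAt (fun z : ℂ => f (u + I * z)) (f' * I) v :=
    hf.comp (v : ℂ) ((hasDerivAt_const_mul I).const_add (u : ℂ))
  refine ⟨_, _, hre.comp_ofReal.const_mul (G v), hG.mul him.comp_ofReal, ?_⟩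
  linear_combination (G v * f') * I_mul_I

theorem sq_mul_rpow_neg_three_halves {v : ℝ} (hv : 0 ≤ v) :
    v ^ 2 * v ^ (-(3 : ℝ) / 2) = √v := by
  rw [Real.sqrt_eq_rpow, ← Real.rpow_natCast, ← Real.rpow_add' hv (by norm_num)]
  norm_num

theorem abs_mul_mul_exp_neg_mul_sq_le {b : ℝ} (hb : 0 < b) (x : ℝ) {r : ℝ} (hr : 0 ≤ r) :
    |x * r * Real.exp (-(b * r * x ^ 2))| ≤ Real.exp (-1) / (b * |x|) := by
  rcases eq_or_ne x 0 with rfl | hx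
  · simp
  have hbx : 0 < b * |x| := by positivity
  have hy : 0 ≤ b * r * x ^ 2 := by positivity
  calc |x * r * Real.exp (-(b * r * x ^ 2))|
      = b * r * x ^ 2 * Real.exp (-(b * r * x ^ 2)) / (b * |x|) := by
        rw [abs_mul, abs_mul, abs_of_nonneg hr, abs_of_pos (Real.exp_pos _), ← sq_abs x]
        field_simp
    _ ≤ Real.exp (-1) / (b * |x|) := by
        gcongr
        exact Real.mul_exp_neg_le_exp_neg_one _

/-- The two components `g_A`, `g_B` of `ψ⁰₀,₁(√r·x)`. -/
def IsPsiComponent (x₂ x₃ : ℝ) (g : ℝ → ℝ) : Prop :=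
  (∀ r : ℝ, g r = -(1 / Real.sqrt 2) * r * x₂ * x₃ * Real.exp (-(2 * Real.pi * r * x₃ ^ 2))) ∨
    (∀ r : ℝ, g r = 1 / (4 * Real.sqrt 2 * Real.pi) * Real.exp (-(2 * Real.pi * r * x₃ ^ 2)))

namespace IsPsiComponent

variable {x₂ x₃ : ℝ} {g : ℝ → ℝ}

theorem continuous (hg : IsPsiComponent x₂ x₃ g) : Continuous g := by
  rcases hg with hg | hg <;> rw [funext hg] <;> fun_prop

theorem exists_abs_le (hg : IsPsiComponent x₂ x₃ g) : ∃ C, ∀ r, 0 ≤ r → |g r| ≤ C := by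
  rcases hg with hg | hg
  · refine ⟨|-(1 / Real.sqrt 2) * x₂| * (Real.exp (-1) / (2 * Real.pi * |x₃|)), fun r hr => ?_⟩
    rw [hg, show -(1 / Real.sqrt 2) * r * x₂ * x₃ * Real.exp (-(2 * Real.pi * r * x₃ ^ 2)) =
      (-(1 / Real.sqrt 2) * x₂) * (x₃ * r * Real.exp (-(2 * Real.pi * r * x₃ ^ 2))) by ring,
      abs_mul]
    gcongr
    exact abs_mul_mul_exp_neg_mul_sq_le Real.two_pi_pos x₃ hr
  · refine ⟨1 / (4 * Real.sqrt 2 * Real.pi), fun r hr => ?_⟩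
    rw [hg, abs_mul, abs_of_pos (by positivity), abs_of_pos (Real.exp_pos _)]
    refine mul_le_of_le_one_right (by positivity) (Real.exp_le_one_iff.mpr ?_)
    have : 0 ≤ 2 * Real.pi * r * x₃ ^ 2 := by positivity
    linarith

end IsPsiComponent

/-- Paper Lemma 5.12, identity `Lψ̃₀,₁(x,τ) = ψ₀,₁(x,τ)`: fix `x = (x₂,x₃) ∈ ℝ²`,
set `n = x₂² - x₃²`, and let `g` be either component `g_A` or `g_B` of `ψ⁰₀,₁(√r·x)`.
Define `F(u+iv) = -(∫_v^∞ g(r)·r^{-3/2} dr)·e^{πin(u+iv)}` on the upper half plane.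
Then `F` is differentiable and
`-2i·v²·(1/2)·(∂F/∂u + i·∂F/∂v)(u+iv) = v^{1/2}·g(v)·e^{πin(u+iv)}` for `v > 0`. -/
theorem stmt15 (x₂ x₃ : ℝ) (g : ℝ → ℝ)
    (hg : (∀ r : ℝ, g r = -(1 / Real.sqrt 2) * r * x₂ * x₃ *
            Real.exp (-(2 * Real.pi * r * x₃ ^ 2))) ∨
          (∀ r : ℝ, g r = 1 / (4 * Real.sqrt 2 * Real.pi) *
            Real.exp (-(2 * Real.pi * r * x₃ ^ 2))))
    (F : ℝ → ℝ → ℂ)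
    (hF : ∀ u v : ℝ, F u v =
      -((∫ r in Set.Ioi v, g r * r ^ (-(3:ℝ)/2) : ℝ) : ℂ) *
        Complex.exp (Real.pi * Complex.I * ((x₂ ^ 2 - x₃ ^ 2 : ℝ) : ℂ) *
          ((u : ℂ) + Complex.I * (v : ℂ))))
    (u v : ℝ) (hv : 0 < v) :
    ∃ du dv : ℂ,
      HasDerivAt (fun u' : ℝ => F u' v) du u ∧
      HasDerivAt (fun v' : ℝ => F u v') dv v ∧
      -2 * Complex.I * ((v : ℂ)) ^ 2 * (1/2) * (du + Complex.I * dv)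
        = ((Real.sqrt v : ℝ) : ℂ) * ((g v : ℝ) : ℂ) *
            Complex.exp (Real.pi * Complex.I * ((x₂ ^ 2 - x₃ ^ 2 : ℝ) : ℂ) *
              ((u : ℂ) + Complex.I * (v : ℂ))) := by
  set h : ℝ → ℝ := fun r => g r * r ^ (-(3:ℝ)/2)
  obtain ⟨C, hC⟩ := IsPsiComponent.exists_abs_le hg
  have hint : IntegrableOn h (Ioi (v / 2)) :=
    (integrableOn_Ioi_rpow_of_lt (by norm_num) (by positivity)).bdd_mul
      (IsPsiComponent.continuous hg).aestronglyMeasurable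
      (ae_restrict_of_forall_mem measurableSet_Ioi fun r hr => hC r (by linarith [mem_Ioi.mp hr]))
  have hcont : ContinuousAt h v := (IsPsiComponent.continuous hg).continuousAt.mul
    (Real.continuousAt_rpow_const _ _ (Or.inl hv.ne'))
  have hG : HasDerivAt (fun w => -((∫ r in Ioi w, h r : ℝ) : ℂ)) (h v : ℂ) v := by
    simpa only [ofReal_neg, neg_neg] using
      ((hasDerivAt_setIntegral_Ioi hint (half_lt_self hv) hcont).ofReal_comp).fun_neg
  obtain ⟨du, dv, hdu, hdv, hsum⟩ := exists_hasDerivAt_partials_mul_holomorphic hG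
    ((hasDerivAt_id' _).const_mul (Real.pi * I * ((x₂ ^ 2 - x₃ ^ 2 : ℝ) : ℂ))).cexp
  refine ⟨du, dv, by simpa only [hF] using hdu, by simpa only [hF] using hdv, ?_⟩
  rw [hsum, ← sq_mul_rpow_neg_three_halves hv.le]
  simp only [h, ofReal_mul, ofReal_pow]
  linear_combination (-(v : ℂ) ^ 2 * g v * (v ^ (-(3:ℝ)/2) : ℝ) *
    cexp (Real.pi * I * ((x₂ ^ 2 - x₃ ^ 2 : ℝ) : ℂ) * ((u : ℂ) + I * (v : ℂ)))) * I_mul_I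
end
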